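/- Let q̂ ∈ ℝ^K, let r ∈ ℝ^K with r_k > 0 for all k, suppose ⟨q̂, p_{·im}⟩ > 0 for all i, m, and define Γ_x := (1/(2M)) Σ_{m=1}^M Σ_{i=1}^I Σ_{j=1}^I Δ(x_{im}, p_{·im}) · diag(r⁻¹) · diag((p_{kim}(δ_{ij} − p_{kjm}))_{k=1,…,K}) · Δ(x_{jm}, p_{·jm})ᵀ, where Δ(z, π) := z·(E_K/⟨q̂, π⟩ − (π·q̂ᵀ)/⟨q̂, π⟩²). If T is any symmetric K×K matrix with T·𝟙 = q̂ (𝟙 the all-ones vector), then 𝟙ᵀ · T · Γ_x · T · 𝟙 = 0. -/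

import Mathlib

/-!
Because `T` is symmetric with `T 𝟙 = q̂`, the form `𝟙ᵀ T Γ_x T 𝟙` equals `q̂ᵀ Γ_x q̂`. Every summand
of `Γ_x` starts with a block `Δ(z, π)`, and `q̂` is a left null vector of each such block:
`q̂ᵀ Δ(z, π) = z (q̂ᵀ / ⟨q̂, π⟩ − ⟨q̂, π⟩ q̂ᵀ / ⟨q̂, π⟩²) = 0`.
-/

open scoped BigOperators
open Matrix

/-- The derivative block `Δ(z, π) = z (E_K/⟨q̂, π⟩ − (π·q̂ᵀ)/⟨q̂, π⟩²)`. -/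
noncomputable def DeltaMat {K : ℕ} (qhat : Fin K → ℝ) (z : ℝ) (π : Fin K → ℝ) :
    Matrix (Fin K) (Fin K) ℝ :=
  z • ((∑ k, qhat k * π k)⁻¹ • (1 : Matrix (Fin K) (Fin K) ℝ) -
    ((∑ k, qhat k * π k) ^ 2)⁻¹ • Matrix.vecMulVec π qhat)

/-- The covariance matrix `Γ_x` of the limiting score in the central limit
theorem for finite reference databases. -/
noncomputable def GammaMat {K I M : ℕ} (p : Fin K → Fin I → Fin M → ℝ)
    (x : Fin I → Fin M → ℕ) (r : Fin K → ℝ) (qhat : Fin K → ℝ) :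
    Matrix (Fin K) (Fin K) ℝ :=
  (1 / (2 * (M : ℝ))) •
    ∑ m : Fin M, ∑ i : Fin I, ∑ j : Fin I,
      DeltaMat qhat (x i m : ℝ) (fun k => p k i m) *
        Matrix.diagonal (fun k => (r k)⁻¹) *
        Matrix.diagonal (fun k => p k i m * ((if i = j then (1 : ℝ) else 0) - p k j m)) *
        (DeltaMat qhat (x j m : ℝ) (fun k => p k j m))ᵀ

theorem Matrix.dotProduct_mul_mul_mulVec_of_isSymm {n R : Type*} [Fintype n] [CommSemiring R]
    {T : Matrix n n R} (hT : T.IsSymm) (A : Matrix n n R) (v : n → R) :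
    v ⬝ᵥ (T * A * T) *ᵥ v = (T *ᵥ v) ⬝ᵥ A *ᵥ (T *ᵥ v) := by
  rw [← mulVec_mulVec, ← mulVec_mulVec, dotProduct_mulVec v T, ← mulVec_transpose, hT.eq]

theorem vecMul_deltaMat_eq_zero {K : ℕ} (qhat : Fin K → ℝ) (z : ℝ) (π : Fin K → ℝ)
    (hπ : ∑ k, qhat k * π k ≠ 0) :
    qhat ᵥ* DeltaMat qhat z π = 0 := by
  have hdot : qhat ⬝ᵥ π = ∑ k, qhat k * π k := rfl
  rw [DeltaMat, vecMul_smul, vecMul_sub, vecMul_smul, vecMul_smul, vecMul_one,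
    vecMul_vecMulVec, hdot, smul_smul, pow_two, mul_inv, inv_mul_cancel_right₀ hπ, sub_self,
    smul_zero]

theorem vecMul_gammaMat_eq_zero {K I M : ℕ} (p : Fin K → Fin I → Fin M → ℝ)
    (x : Fin I → Fin M → ℕ) (r qhat : Fin K → ℝ) (hq : ∀ i m, ∑ k, qhat k * p k i m ≠ 0) :
    qhat ᵥ* GammaMat p x r qhat = 0 := by
  simp only [GammaMat, vecMul_smul, vecMul_sum, ← vecMul_vecMul,
    vecMul_deltaMat_eq_zero _ _ _ (hq _ _), zero_vecMul, Finset.sum_const_zero, smul_zero]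

theorem ones_T_Gamma_T_ones_eq_zero_general
    (K I M : ℕ)
    (p : Fin K → Fin I → Fin M → ℝ)
    (x : Fin I → Fin M → ℕ)
    (qhat : Fin K → ℝ) (r : Fin K → ℝ)
    (hq : ∀ i m, 0 < ∑ k, qhat k * p k i m)
    (T : Matrix (Fin K) (Fin K) ℝ) (hTsymm : T.IsSymm)
    (hT : T.mulVec (fun _ => (1 : ℝ)) = qhat) :
    dotProduct (fun _ => (1 : ℝ))
      ((T * GammaMat p x r qhat * T).mulVec (fun _ => (1 : ℝ))) = 0 := by
  rw [dotProduct_mul_mul_mulVec_of_isSymm hTsymm, hT, dotProduct_mulVec,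
    vecMul_gammaMat_eq_zero p x r qhat fun i m => (hq i m).ne', zero_dotProduct]

/-- If `T` is symmetric with `T·𝟙 = q̂`, then `𝟙ᵀ·T·Γ_x·T·𝟙 = 0`. -/
theorem ones_T_Gamma_T_ones_eq_zero
    (K I M : ℕ) (hK : 2 ≤ K) (hI : 2 ≤ I) (hM : 1 ≤ M)
    (p : Fin K → Fin I → Fin M → ℝ)
    (hp0 : ∀ k i m, 0 ≤ p k i m)
    (hp1 : ∀ k m, ∑ i, p k i m = 1)
    (x : Fin I → Fin M → ℕ)
    (hx2 : ∀ i m, x i m ≤ 2)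
    (hxsum : ∀ m, ∑ i, x i m = 2)
    (qhat : Fin K → ℝ) (r : Fin K → ℝ) (hr : ∀ k, 0 < r k)
    (hq : ∀ i m, 0 < ∑ k, qhat k * p k i m)
    (T : Matrix (Fin K) (Fin K) ℝ) (hTsymm : T.IsSymm)
    (hT : T.mulVec (fun _ => (1 : ℝ)) = qhat) :
    dotProduct (fun _ => (1 : ℝ))
      ((T * GammaMat p x r qhat * T).mulVec (fun _ => (1 : ℝ))) = 0 :=
  ones_T_Gamma_T_ones_eq_zero_general K I M p x qhat r hq T hTsymm hT
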